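/- arXiv:1203.6346 — 6 statements merged into one kernel-verified Lean document; each statement's English description precedes it below -/
import Mathlib

section
/- For every fixed window size w, the probability that the segregation process on the ring of n nodes eventually reaches a frozen configuration (a configuration from which no further swaps are possible) converges to 1 as n tends to infinity. -/
/-!
Write `σ = ±1` for the spins of a configuration and `A` for the coupling matrix of the ring
(`A i j` counts the offsets `k ∈ [1, w]` with `j = i ± k`). Then `σᵢ (Aσ)ᵢ = 2 aᵢ - 2w`, where
`aᵢ` is the number of neighbours of `i` that agree with it, so an unhappy node has
`σᵢ (Aσ)ᵢ ≤ -2`. A legal swap flips the spins of two unhappy nodes `u, v` of opposite labels,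
and as `Aᵤᵤ = 0` and `Aᵤᵥ ≤ 1` for `n > 2w`, it raises the energy `σᵀAσ` by at least `8`.
Hence `φ = 2wn - Σᵢ aᵢ` is a natural number that strictly decreases with every swap.

As long as the process is not frozen, some proposable pair swaps, so with `D` proposable pairs
the configuration stays put with probability at most `r = 1 - 1/D`. Then `2 ^ φ`, set to `0`
once the process is frozen, shrinks in expectation by the factor `(1 + r) / 2 < 1` at every
step, so the probability of not being frozen at time `T` decays geometrically in `T`.
-/

open MeasureTheory ProbabilityTheory
open scoped ENNReal NNReal

namespace Schelling

/-- Labels: `true` = type `x`, `false` = type `o`.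
A configuration on the ring of `n` nodes assigns a label to each node. -/
abbrev Config (n : ℕ) := ZMod n → Bool

/-- The ±1 value of a label: `x ↦ +1`, `o ↦ -1`. -/
def xval (b : Bool) : ℤ := if b then 1 else -1

/-- A node `i` is happy (tolerance τ = 1/2) if at least `w` of its `2w` nearest
neighbours `i ± 1, …, i ± w` carry the same label as `i`. -/
def happy (w : ℕ) {n : ℕ} (c : Config n) (i : ZMod n) : Prop :=
  w ≤ ∑ k ∈ Finset.Icc 1 w,
      ((if c (i + (k : ZMod n)) = c i then 1 else 0) +
       (if c (i - (k : ZMod n)) = c i then 1 else 0))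

instance (w : ℕ) {n : ℕ} (c : Config n) (i : ZMod n) : Decidable (happy w c i) :=
  Nat.decLe _ _

/-- The result of exchanging the labels of nodes `i` and `j`. -/
def doSwap {n : ℕ} (c : Config n) (i j : ZMod n) : Config n :=
  Function.update (Function.update c i (c j)) j (c i)

/-- One step of the dynamics: the proposed pair `p` swaps labels iff both nodes are
unhappy and carry opposite labels. -/
def swapStep (w : ℕ) {n : ℕ} (c : Config n) (p : ZMod n × ZMod n) : Config n :=
  if ¬ happy w c p.1 ∧ ¬ happy w c p.2 ∧ c p.1 ≠ c p.2 then doSwap c p.1 p.2 else c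

/-- The trajectory of the segregation process started from `c0`, where `pr t` is the
pair of nodes proposed for a swap at time `t`. -/
def traj (w : ℕ) {n : ℕ} (c0 : Config n) (pr : ℕ → ZMod n × ZMod n) : ℕ → Config n
  | 0 => c0
  | t + 1 => swapStep w (traj w c0 pr t) (pr t)

/-- A configuration is frozen if it contains no pair of unhappy, oppositely labeled
nodes, so that no further swaps are possible. -/
def Frozen (w : ℕ) {n : ℕ} (c : Config n) : Prop :=
  ∀ i j : ZMod n, ¬(¬ happy w c i ∧ ¬ happy w c j ∧ c i ≠ c j)

/-- `c'` is obtained from `c` by one legal swap: two distinct unhappy, oppositely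
labeled nodes exchange labels. -/
def LegalSwap (w : ℕ) {n : ℕ} (c c' : Config n) : Prop :=
  ∃ i j : ZMod n, i ≠ j ∧ ¬ happy w c i ∧ ¬ happy w c j ∧ c i ≠ c j ∧ c' = doSwap c i j

/-- The block of `len` consecutive nodes starting at `s` is monochromatic. -/
def MonochromaticBlock {n : ℕ} (c : Config n) (s : ZMod n) (len : ℕ) : Prop :=
  ∀ k < len, c (s + (k : ZMod n)) = c s

/-- A firewall is a monochromatic block of at least `w + 1` consecutive nodes. -/
def HasFirewall (w : ℕ) {n : ℕ} (c : Config n) : Prop :=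
  ∃ (s : ZMod n) (len : ℕ), w + 1 ≤ len ∧ MonochromaticBlock c s len

/-- Node `i` belongs to some firewall of `c`. -/
def InFirewall (w : ℕ) {n : ℕ} (c : Config n) (i : ZMod n) : Prop :=
  ∃ (s : ZMod n) (len : ℕ), w + 1 ≤ len ∧ MonochromaticBlock c s len ∧
    ∃ k < len, i = s + (k : ZMod n)

instance (n : ℕ) : MeasurableSpace (ZMod n) := ⊤

/-- The uniform probability measure on a finite set `s`. -/
noncomputable def uniformOn {α : Type*} [MeasurableSpace α] (s : Finset α) : Measure α :=
  (s.card : ℝ≥0∞)⁻¹ • ∑ a ∈ s, Measure.dirac a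

/-- Unordered proposals are modeled as ordered pairs of distinct nodes. -/
def distinctPairs (n : ℕ) [NeZero n] : Finset (ZMod n × ZMod n) :=
  Finset.univ.filter fun p => p.1 ≠ p.2

/-- The uniform distribution of the initial configuration. -/
noncomputable def configMeasure (n : ℕ) [NeZero n] : Measure (Config n) :=
  uniformOn (Finset.univ : Finset (Config n))

/-- The uniform distribution of a proposed pair. -/
noncomputable def pairMeasure (n : ℕ) [NeZero n] : Measure (ZMod n × ZMod n) :=
  uniformOn (distinctPairs n)

/-- `(init, prop)` is a realization of the segregation process randomness: for every
finite horizon `T`, the initial configuration together with the first `T` proposals is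
distributed as (uniform configuration) × (i.i.d. uniform distinct pairs). -/
def IsSchellingProcess (n : ℕ) [NeZero n] {Ω : Type*} [MeasurableSpace Ω]
    (μ : Measure Ω) (init : Ω → Config n) (prop : ℕ → Ω → ZMod n × ZMod n) : Prop :=
  ∀ T : ℕ, Measure.map (fun ω => (init ω, fun t : Fin T => prop t ω)) μ
      = (configMeasure n).prod (Measure.pi fun _ : Fin T => pairMeasure n)

/-- The x-bias of node `i`: the sum of the ±1 values over the window `i - w, …, i + w`. -/
def bias (w : ℕ) {n : ℕ} (c : Config n) (i : ZMod n) : ℤ :=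
  xval (c i) + ∑ k ∈ Finset.Icc 1 w,
    (xval (c (i + (k : ZMod n))) + xval (c (i - (k : ZMod n))))

/-- An x-firewall incubator: a block `F` of `len` consecutive nodes starting at `s`,
made of a left defender (first `w+1` nodes), an internal block, and a right defender
(last `w+1` nodes), such that every node of `F` has x-bias `> √w`, the minimum bias on
the left defender is attained at its left endpoint, and the minimum bias on the right
defender is attained at its right endpoint. -/
def IsIncubator (w : ℕ) {n : ℕ} (c : Config n) (s : ZMod n) (len : ℕ) : Prop :=
  2 * (w + 1) ≤ len ∧
  (∀ k < len, Real.sqrt w < ((bias w c (s + (k : ZMod n)) : ℤ) : ℝ)) ∧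
  (∀ k < w + 1, bias w c s ≤ bias w c (s + (k : ZMod n))) ∧
  (∀ k < w + 1,
    bias w c (s + ((len - 1 : ℕ) : ZMod n)) ≤ bias w c (s + ((len - 1 - k : ℕ) : ZMod n)))

/-- The sum of the first `j` entries of a ±1 sequence. -/
def chiPrefix {m : ℕ} (B : Fin m → Bool) (j : ℕ) : ℤ :=
  ∑ i : Fin m, if (i : ℕ) < j then xval (B i) else 0

/-- The total sum of a ±1 sequence. -/
def chi {m : ℕ} (B : Fin m → Bool) : ℤ := ∑ i : Fin m, xval (B i)

/-- The sum of the last `j` entries of a ±1 sequence. -/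
def chiSuffix {m : ℕ} (B : Fin m → Bool) (j : ℕ) : ℤ :=
  ∑ i : Fin m, if m - j ≤ (i : ℕ) then xval (B i) else 0

/-- A sequence `B ∈ {±1}^w` is x-promoting if `χ(B) ≥ 5√w` and for all `1 ≤ j ≤ w`,
`χ_j(B) > -2√w` and `χ_{-j}(B) > -2√w`. -/
def XPromoting (w : ℕ) (B : Fin w → Bool) : Prop :=
  5 * Real.sqrt w ≤ ((chi B : ℤ) : ℝ) ∧
  ∀ j : ℕ, 1 ≤ j → j ≤ w →
    (-2) * Real.sqrt w < ((chiPrefix B j : ℤ) : ℝ) ∧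
    (-2) * Real.sqrt w < ((chiSuffix B j : ℤ) : ℝ)

/-- The concatenation of the three length-`w` sequences `B, B', B''`, as a function on
positions `0, …, 3w - 1`. -/
def concat3 (w : ℕ) (B B' B'' : Fin w → Bool) (i : ℕ) : Bool :=
  if h : i < w then B ⟨i, h⟩
  else if h' : i < 2 * w then B' ⟨i - w, by omega⟩
  else if h'' : i < 3 * w then B'' ⟨i - 2 * w, by omega⟩
  else false

/-- The sign sequences of length `a + b` containing exactly `a` entries `+1`
(i.e. `true`) and `b` entries `-1` (i.e. `false`). -/
def ballotSeqs (a b : ℕ) : Finset (Fin (a + b) → Bool) :=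
  Finset.univ.filter fun f => (Finset.univ.filter fun i => f i = true).card = a

/-- Node `i` is, at time `t`, selected to participate in a proposed swap together with
an unhappy, oppositely labeled node. -/
def selectedWith (w : ℕ) {n : ℕ} (c0 : Config n) (pr : ℕ → ZMod n × ZMod n)
    (i : ZMod n) (t : ℕ) : Prop :=
  ((pr t).1 = i ∧ ¬ happy w (traj w c0 pr t) (pr t).2 ∧
      traj w c0 pr t (pr t).2 ≠ traj w c0 pr t i) ∨
  ((pr t).2 = i ∧ ¬ happy w (traj w c0 pr t) (pr t).1 ∧
      traj w c0 pr t (pr t).1 ≠ traj w c0 pr t i)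

/-- The satisfaction time of node `i`: the first time at which `i` is selected in a
proposed swap together with an unhappy, oppositely labeled node (`∞` if never). -/
noncomputable def satTime (w : ℕ) {n : ℕ} (c0 : Config n) (pr : ℕ → ZMod n × ZMod n)
    (i : ZMod n) : ℕ∞ :=
  sInf {t : ℕ∞ | ∃ t' : ℕ, t = (t' : ℕ∞) ∧ selectedWith w c0 pr i t'}

/-- Node `i` is impatient at time `t` if it is unhappy at time `t` and `t ≤ t*_i`. -/
def Impatient (w : ℕ) {n : ℕ} (c0 : Config n) (pr : ℕ → ZMod n × ZMod n)
    (i : ZMod n) (t : ℕ) : Prop :=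
  ¬ happy w (traj w c0 pr t) i ∧ (t : ℕ∞) ≤ satTime w c0 pr i

/-- The left combatants of the block starting at `s`: the nodes of the left attacker
`A_L = {s - w, …, s - 1}` initially labeled `x`, together with the nodes of the left
defender `D_L = {s, …, s + w}` initially labeled `o`. -/
def leftCombatants (w : ℕ) {n : ℕ} [NeZero n] (c0 : Config n) (s : ZMod n) :
    Finset (ZMod n) :=
  ((Finset.Icc 1 w).image fun k : ℕ => s - (k : ZMod n)).filter (fun i => c0 i = true) ∪
  ((Finset.range (w + 1)).image fun k : ℕ => s + (k : ZMod n)).filter (fun i => c0 i = false)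

/-- The right combatants of the block of length `len` starting at `s`: the nodes of the
right attacker `A_R = {s + len, …, s + len + w - 1}` initially labeled `x`, together
with the nodes of the right defender `D_R = {s + len - 1 - w, …, s + len - 1}` initially
labeled `o`. -/
def rightCombatants (w : ℕ) {n : ℕ} [NeZero n] (c0 : Config n) (s : ZMod n) (len : ℕ) :
    Finset (ZMod n) :=
  ((Finset.range w).image fun k : ℕ => s + ((len + k : ℕ) : ZMod n)).filter
      (fun i => c0 i = true) ∪
  ((Finset.range (w + 1)).image fun k : ℕ => s + ((len - 1 - k : ℕ) : ZMod n)).filter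
      (fun i => c0 i = false)

/-- `l` is a pseudo-transcript of the combatant set `C` relative to time `t0`: it
enumerates `C` without repetitions, all combatants with satisfaction time `> t0` come
first (in an arbitrary order, corresponding to an arbitrary permutation of their
signs), and the remaining combatants are listed in decreasing order of satisfaction
time. -/
def IsPseudoTranscript (w : ℕ) {n : ℕ} (c0 : Config n) (pr : ℕ → ZMod n × ZMod n)
    (t0 : ℕ) (C : Finset (ZMod n)) (l : List (ZMod n)) : Prop :=
  l.Nodup ∧ l.toFinset = C ∧
  ∀ p q : Fin l.length, (p : ℕ) < (q : ℕ) →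
    ((t0 : ℕ∞) < satTime w c0 pr (l.get q) → (t0 : ℕ∞) < satTime w c0 pr (l.get p)) ∧
    (satTime w c0 pr (l.get q) ≤ (t0 : ℕ∞) → satTime w c0 pr (l.get p) ≤ (t0 : ℕ∞) →
      satTime w c0 pr (l.get q) ≤ satTime w c0 pr (l.get p))

/-- All partial sums of the sign sequence associated to the list `l` (where each node
contributes the ±1 value of its initial label) are nonnegative. -/
def NonnegPartialSums {n : ℕ} (c0 : Config n) (l : List (ZMod n)) : Prop :=
  ∀ m ≤ l.length, 0 ≤ ((l.take m).map fun i => xval (c0 i)).sum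

/-- Nodes `i` and `j` belong to the same monochromatic run of `c`. -/
def sameRun {n : ℕ} (c : Config n) (i j : ZMod n) : Prop :=
  ∃ k : ℕ, ((j = i + (k : ZMod n)) ∧ ∀ m ≤ k, c (i + (m : ZMod n)) = c i) ∨
           ((j = i - (k : ZMod n)) ∧ ∀ m ≤ k, c (i - (m : ZMod n)) = c i)

/-- The length of the monochromatic run of `c` containing node `i`. -/
noncomputable def runLength {n : ℕ} (c : Config n) (i : ZMod n) : ℕ :=
  Nat.card {j : ZMod n // sameRun c i j}

/-- The number of unhappy nodes with label `b`. -/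
noncomputable def unhappyCount (w : ℕ) {n : ℕ} (c : Config n) (b : Bool) : ℕ :=
  Nat.card {i : ZMod n // c i = b ∧ ¬ happy w c i}

/-- The number of impatient nodes at time `t`. -/
noncomputable def impatientCount (w : ℕ) {n : ℕ} (c0 : Config n)
    (pr : ℕ → ZMod n × ZMod n) (t : ℕ) : ℕ :=
  Nat.card {i : ZMod n // Impatient w c0 pr i t}

/-- The absolute difference between the numbers of unhappy `x`'s and unhappy `o`'s. -/
noncomputable def unhappyImbalance (w : ℕ) {n : ℕ} (c : Config n) : ℝ :=
  |(unhappyCount w c true : ℝ) - (unhappyCount w c false : ℝ)|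

/-- The earliest time at which fewer than `bound` nodes are impatient (`∞` if never). -/
noncomputable def firstFewImpatient (w : ℕ) {n : ℕ} (c0 : Config n)
    (pr : ℕ → ZMod n × ZMod n) (bound : ℝ) : ℕ∞ :=
  sInf {t : ℕ∞ | ∃ t' : ℕ, t = (t' : ℕ∞) ∧ (impatientCount w c0 pr t' : ℝ) < bound}

/-- The earliest time at which the numbers of unhappy `x`'s and unhappy `o`'s differ by
more than `bound` (`∞` if never). -/
noncomputable def firstImbalance (w : ℕ) {n : ℕ} (c0 : Config n)
    (pr : ℕ → ZMod n × ZMod n) (bound : ℝ) : ℕ∞ :=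
  sInf {t : ℕ∞ | ∃ t' : ℕ, t = (t' : ℕ∞) ∧ bound < unhappyImbalance w (traj w c0 pr t')}

/-- In the disjoint-cycles graph `G` (cycles of length `L`), the node reached from `i`
by moving `k` steps forward inside `i`'s cycle. -/
def gnbr (L : ℕ) {n : ℕ} (i : ZMod n) (k : ℕ) : ZMod n :=
  (((i.val / L) * L + ((i.val % L + k) % L) : ℕ) : ZMod n)

/-- Happiness with respect to the disjoint-cycles graph `G`. -/
def ghappy (w L : ℕ) {n : ℕ} (c : Config n) (i : ZMod n) : Prop :=
  w ≤ ∑ k ∈ Finset.Icc 1 w,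
      ((if c (gnbr L i k) = c i then 1 else 0) +
       (if c (gnbr L i (L - k)) = c i then 1 else 0))

instance (w L : ℕ) {n : ℕ} (c : Config n) (i : ZMod n) : Decidable (ghappy w L c i) :=
  Nat.decLe _ _

/-- One step of the segregation dynamics on the disjoint-cycles graph `G`. -/
def gswapStep (w L : ℕ) {n : ℕ} (c : Config n) (p : ZMod n × ZMod n) : Config n :=
  if ¬ ghappy w L c p.1 ∧ ¬ ghappy w L c p.2 ∧ c p.1 ≠ c p.2 then doSwap c p.1 p.2 else c

/-- The trajectory of the process on `G`, coupled with the ring process by using the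
same initial configuration and the same proposed pairs. -/
def gtraj (w L : ℕ) {n : ℕ} (c0 : Config n) (pr : ℕ → ZMod n × ZMod n) : ℕ → Config n
  | 0 => c0
  | t + 1 => gswapStep w L (gtraj w L c0 pr t) (pr t)

/-- The set of nodes within `w` steps of `i` in either graph (including `i`). -/
def nbhd (w L : ℕ) {n : ℕ} (i : ZMod n) : Set (ZMod n) :=
  {j | ∃ k ≤ w, j = i + (k : ZMod n) ∨ j = i - (k : ZMod n) ∨
        j = gnbr L i k ∨ j = gnbr L i (L - k)}

open Classical in
/-- The tainted set `D(t)`: initially the nodes whose residue mod `L` lies in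
`{-w+1, …, w-1}`; whenever a proposed pair touches a tainted node, all nodes within `w`
steps (in either graph) of either member of the pair become tainted. -/
noncomputable def tainted (w L : ℕ) {n : ℕ} (pr : ℕ → ZMod n × ZMod n) :
    ℕ → Set (ZMod n)
  | 0 => {i | i.val % L < w ∨ L - w < i.val % L}
  | t + 1 =>
      if (pr t).1 ∈ tainted w L pr t ∨ (pr t).2 ∈ tainted w L pr t then
        tainted w L pr t ∪ nbhd w L (pr t).1 ∪ nbhd w L (pr t).2
      else tainted w L pr t

section QuadraticForm

open Matrix

variable {ι R : Type*} [Fintype ι] [DecidableEq ι] [CommRing R]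

theorem dotProduct_mulVec_sub_single_sub_single {A : Matrix ι ι R} (hA : A.IsSymm)
    (x : ι → R) (u v : ι) (a b : R) :
    (x - Pi.single u a - Pi.single v b) ⬝ᵥ A *ᵥ (x - Pi.single u a - Pi.single v b) =
      x ⬝ᵥ A *ᵥ x - 2 * (a * (A *ᵥ x) u + b * (A *ᵥ x) v) +
        (a * a * A u u + 2 * a * b * A u v + b * b * A v v) := by
  have hcol : ∀ j, x ⬝ᵥ A.col j = (A *ᵥ x) j := fun j => by
    simp only [dotProduct, mulVec, col_apply, hA.apply, mul_comm]
  simp only [mulVec_sub, sub_dotProduct, dotProduct_sub, mulVec_single, single_dotProduct]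
  simp [hcol, hA.apply u v]
  ring

end QuadraticForm

section Absorption

variable {α β : Type*} [MeasurableSpace β] [Countable β] [MeasurableSingletonClass β]
  {μ : Measure β} [IsProbabilityMeasure μ] {step : α → β → α} {φ : α → ℕ} {r : ℝ≥0∞}

open Classical in
noncomputable def absorptionWeight (step : α → β → α) (φ : α → ℕ) (x : α) : ℝ≥0∞ :=
  if ∀ p, step x p = x then 0 else 2 ^ φ x

theorem lintegral_absorptionWeight_step_le
    (hφ : ∀ x p, step x p ≠ x → φ (step x p) < φ x)
    (hstay : ∀ x, (∃ p, step x p ≠ x) → μ {p | step x p = x} ≤ r) (x : α) :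
    ∫⁻ p, absorptionWeight step φ (step x p) ∂μ ≤ (1 + r) / 2 * absorptionWeight step φ x := by
  by_cases hx : ∀ p, step x p = x
  · simp [absorptionWeight, hx]
  obtain ⟨p₀, hp₀⟩ := not_forall.mp hx
  obtain ⟨m, hm⟩ : ∃ m, φ x = m + 1 := ⟨φ x - 1, by have := hφ x p₀ hp₀; omega⟩
  have hweight : absorptionWeight step φ x = 2 * 2 ^ m := by
    rw [absorptionWeight, if_neg hx, hm, pow_succ, mul_comm]
  have hpoint : ∀ p, absorptionWeight step φ (step x p) ≤
      2 ^ m * ({p | step x p = x}.indicator 1 p + 1) := by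
    intro p
    by_cases hp : step x p = x
    · simp only [hp, hweight, Set.mem_ofPred_eq, Set.indicator_of_mem, Pi.one_apply]
      exact le_of_eq (by ring)
    · calc absorptionWeight step φ (step x p) ≤ 2 ^ φ (step x p) := by
            unfold absorptionWeight; split_ifs <;> simp
        _ ≤ 2 ^ m := pow_le_pow_right₀ one_le_two (by have := hφ x p hp; omega)
        _ = _ := by simp [hp]
  calc ∫⁻ p, absorptionWeight step φ (step x p) ∂μ
      ≤ ∫⁻ p, 2 ^ m * ({p | step x p = x}.indicator 1 p + 1) ∂μ := lintegral_mono hpoint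
    _ = 2 ^ m * (μ {p | step x p = x} + 1) := by
        rw [lintegral_const_mul _ (measurable_of_countable _),
          lintegral_add_right _ measurable_const, lintegral_indicator_one
            MeasurableSet.of_discrete, lintegral_one, measure_univ]
    _ ≤ 2 ^ m * (r + 1) := by gcongr; exact hstay x ⟨p₀, hp₀⟩
    _ = (1 + r) / 2 * absorptionWeight step φ x := by
        rw [hweight, add_comm r, ← mul_assoc, mul_comm _ 2, ENNReal.mul_div_cancel two_ne_zero
          ENNReal.ofNat_ne_top, mul_comm]

theorem lintegral_absorptionWeight_foldl_le
    (hφ : ∀ x p, step x p ≠ x → φ (step x p) < φ x)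
    (hstay : ∀ x, (∃ p, step x p ≠ x) → μ {p | step x p = x} ≤ r) (T : ℕ) (x : α) :
    ∫⁻ g, absorptionWeight step φ ((List.ofFn g).foldl step x) ∂(Measure.pi fun _ : Fin T => μ)
      ≤ ((1 + r) / 2) ^ T * absorptionWeight step φ x := by
  induction T generalizing x with
  | zero => simp
  | succ T ih =>
    have hsplit := (measurePreserving_piFinSuccAbove (fun _ : Fin (T + 1) => μ) 0).symm
    rw [MeasurePreserving.lintegral_map_equiv _ _ hsplit]
    calc _ ≤ ∫⁻ p, ∫⁻ g, absorptionWeight step φ ((List.ofFn g).foldl step (step x p))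
            ∂(Measure.pi fun _ : Fin T => μ) ∂μ := by
          refine (lintegral_prod_le _).trans_eq ?_
          simp [List.ofFn_succ]
      _ ≤ ∫⁻ p, ((1 + r) / 2) ^ T * absorptionWeight step φ (step x p) ∂μ :=
          lintegral_mono fun p => ih (step x p)
      _ ≤ ((1 + r) / 2) ^ T * ((1 + r) / 2 * absorptionWeight step φ x) := by
          rw [lintegral_const_mul _ (measurable_of_countable _)]
          gcongr
          exact lintegral_absorptionWeight_step_le hφ hstay x
      _ = _ := by ring

theorem measure_pi_foldl_not_absorbed_le
    (hφ : ∀ x p, step x p ≠ x → φ (step x p) < φ x)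
    (hstay : ∀ x, (∃ p, step x p ≠ x) → μ {p | step x p = x} ≤ r) (T : ℕ) (x : α) :
    Measure.pi (fun _ : Fin T => μ)
        {g | ∃ p, step ((List.ofFn g).foldl step x) p ≠ (List.ofFn g).foldl step x} ≤
      ((1 + r) / 2) ^ T * 2 ^ φ x := by
  have hind : ∀ y, {y | ∃ p, step y p ≠ y}.indicator 1 y ≤ absorptionWeight step φ y := by
    intro y
    by_cases hy : ∃ p, step y p ≠ y
    · rw [absorptionWeight, if_neg (not_forall.mpr hy)]
      simpa [hy] using one_le_pow₀ (one_le_two : (1 : ℝ≥0∞) ≤ 2)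
    · simp [hy]
  calc _ = ∫⁻ g, {y | ∃ p, step y p ≠ y}.indicator 1 ((List.ofFn g).foldl step x)
          ∂(Measure.pi fun _ : Fin T => μ) := by
        rw [← lintegral_indicator_one MeasurableSet.of_discrete]
        rfl
    _ ≤ ∫⁻ g, absorptionWeight step φ ((List.ofFn g).foldl step x)
          ∂(Measure.pi fun _ : Fin T => μ) := lintegral_mono fun g => hind _
    _ ≤ ((1 + r) / 2) ^ T * absorptionWeight step φ x :=
        lintegral_absorptionWeight_foldl_le hφ hstay T x
    _ ≤ ((1 + r) / 2) ^ T * 2 ^ φ x := by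
        gcongr
        unfold absorptionWeight
        split_ifs <;> simp

theorem one_add_div_two_lt_one {r : ℝ≥0∞} (hr : r < 1) : (1 + r) / 2 < 1 := by
  refine ENNReal.div_lt_of_lt_mul ?_
  rw [one_mul, ← one_add_one_eq_two]
  exact ENNReal.add_lt_add_left ENNReal.one_ne_top hr

end Absorption

section Uniform

variable {α : Type*} [MeasurableSpace α] [MeasurableSingletonClass α]

theorem uniformOn_apply (s : Finset α) (A : Set α) :
    uniformOn s A = (s.card : ℝ≥0∞)⁻¹ * ∑ a ∈ s, A.indicator 1 a := by
  simp [uniformOn, Measure.dirac_apply]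

theorem isProbabilityMeasure_uniformOn {s : Finset α} (hs : s.Nonempty) :
    IsProbabilityMeasure (uniformOn s) := by
  constructor
  simp only [uniformOn_apply, Set.indicator_univ, Pi.one_apply, Finset.sum_const, nsmul_one]
  exact ENNReal.inv_mul_cancel (by simpa using hs.ne_empty) (ENNReal.natCast_ne_top _)

theorem uniformOn_le_one_sub_inv_card {s : Finset α} {A : Set α} {a : α} (ha : a ∈ s)
    (haA : a ∉ A) : uniformOn s A ≤ 1 - (s.card : ℝ≥0∞)⁻¹ := by
  have := isProbabilityMeasure_uniformOn ⟨a, ha⟩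
  have hsingle : uniformOn s {a} = (s.card : ℝ≥0∞)⁻¹ := by
    classical
    simp [uniformOn_apply, Set.indicator_apply, ha]
  refine ENNReal.le_sub_of_add_le_right (by simpa using Finset.ne_empty_of_mem ha) ?_
  rw [← hsingle, ← measure_union (Set.disjoint_singleton_right.mpr haA)
    (measurableSet_singleton a)]
  exact prob_le_one

end Uniform

section Ring

open Matrix

variable {w n : ℕ}

def ringCoupling (w n : ℕ) : Matrix (ZMod n) (ZMod n) ℤ :=
  Matrix.of fun i j => ∑ k ∈ Finset.Icc 1 w,
    ((if j = i + (k : ZMod n) then 1 else 0) + (if j = i - (k : ZMod n) then 1 else 0))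

def spin (c : Config n) (i : ZMod n) : ℤ := xval (c i)

def agreeCount (w : ℕ) (c : Config n) (i : ZMod n) : ℕ :=
  ∑ k ∈ Finset.Icc 1 w,
    ((if c (i + (k : ZMod n)) = c i then 1 else 0) + (if c (i - (k : ZMod n)) = c i then 1 else 0))

def concord (w : ℕ) [NeZero n] (c : Config n) : ℕ := ∑ i, agreeCount w c i

theorem happy_iff_le_agreeCount {c : Config n} {i : ZMod n} :
    happy w c i ↔ w ≤ agreeCount w c i := Iff.rfl

theorem ringCoupling_isSymm : (ringCoupling w n).IsSymm := by
  ext i j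
  simp only [transpose_apply, ringCoupling, of_apply]
  refine Finset.sum_congr rfl fun k _ => ?_
  rw [add_comm]
  congr 2 <;> simp only [eq_iff_iff] <;> constructor <;> rintro rfl <;> ring

theorem ringCoupling_apply [NeZero n] (hn : w < n) (u v : ZMod n) :
    ringCoupling w n u v = (if (v - u).val ∈ Finset.Icc 1 w then 1 else 0) +
      (if n - (v - u).val ∈ Finset.Icc 1 w then 1 else 0) := by
  have hterm : ∀ k ∈ Finset.Icc 1 w,
      ((if v = u + (k : ZMod n) then 1 else 0) + (if v = u - (k : ZMod n) then 1 else 0) : ℤ) =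
        (if (v - u).val = k then 1 else 0) + (if n - (v - u).val = k then 1 else 0) := by
    intro k hk
    obtain ⟨hk1, hkw⟩ := Finset.mem_Icc.mp hk
    have hplus : v = u + (k : ZMod n) ↔ (v - u).val = k := by
      rw [← sub_eq_iff_eq_add', ← (ZMod.val_injective n).eq_iff, ZMod.val_cast_of_lt (by omega)]
    have hminus : v = u - (k : ZMod n) ↔ n - (v - u).val = k := by
      have hk0 : (k : ZMod n) ≠ 0 := by
        rw [Ne, ← ZMod.val_eq_zero, ZMod.val_cast_of_lt (by omega)]; omega
      have hsub : v = u - (k : ZMod n) ↔ v - u = -(k : ZMod n) := by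
        constructor <;> intro h <;> linear_combination h
      have := ZMod.val_lt (v - u)
      rw [hsub, ← (ZMod.val_injective n).eq_iff, ZMod.neg_val, if_neg hk0,
        ZMod.val_cast_of_lt (by omega)]
      omega
    simp only [hplus, hminus]
  rw [ringCoupling, of_apply, Finset.sum_congr rfl hterm, Finset.sum_add_distrib,
    Finset.sum_ite_eq, Finset.sum_ite_eq]

theorem ringCoupling_apply_self [NeZero n] (hn : w < n) (u : ZMod n) :
    ringCoupling w n u u = 0 := by
  simp [ringCoupling_apply hn]
  omega

theorem ringCoupling_le_one [NeZero n] (hn : 2 * w < n) (u v : ZMod n) :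
    ringCoupling w n u v ≤ 1 := by
  rw [ringCoupling_apply (by omega)]
  have := ZMod.val_lt (v - u)
  split_ifs with h1 h2 <;> simp only [Finset.mem_Icc] at * <;> omega

theorem ringCoupling_mulVec_spin [NeZero n] (c : Config n) (i : ZMod n) :
    (ringCoupling w n *ᵥ spin c) i =
      ∑ k ∈ Finset.Icc 1 w, (spin c (i + (k : ZMod n)) + spin c (i - (k : ZMod n))) := by
  simp only [mulVec, dotProduct, ringCoupling, of_apply, Finset.sum_mul, add_mul, ite_mul,
    one_mul, zero_mul]
  rw [Finset.sum_comm]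
  simp [Finset.sum_add_distrib]

theorem spin_mul_ringCoupling_mulVec_spin [NeZero n] (c : Config n) (i : ZMod n) :
    spin c i * (ringCoupling w n *ᵥ spin c) i = 2 * agreeCount w c i - 2 * w := by
  have hterm : ∀ k ∈ Finset.Icc 1 w,
      spin c i * (spin c (i + (k : ZMod n)) + spin c (i - (k : ZMod n))) =
        2 * (((if c (i + (k : ZMod n)) = c i then 1 else 0) +
          (if c (i - (k : ZMod n)) = c i then 1 else 0) : ℕ) : ℤ) - 2 := by
    intro k _
    simp only [spin, xval]
    cases c i <;> cases c (i + (k : ZMod n)) <;> cases c (i - (k : ZMod n)) <;> simp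
  rw [ringCoupling_mulVec_spin, Finset.mul_sum, Finset.sum_congr rfl hterm,
    Finset.sum_sub_distrib, ← Finset.mul_sum, agreeCount]
  simp [mul_comm]

theorem spin_mul_ringCoupling_mulVec_spin_le_of_not_happy [NeZero n] {c : Config n}
    {i : ZMod n} (h : ¬ happy w c i) :
    spin c i * (ringCoupling w n *ᵥ spin c) i ≤ -2 := by
  rw [happy_iff_le_agreeCount, not_le] at h
  rw [spin_mul_ringCoupling_mulVec_spin]
  omega

theorem spin_dotProduct_ringCoupling_mulVec_spin [NeZero n] (c : Config n) :
    spin c ⬝ᵥ ringCoupling w n *ᵥ spin c = 2 * concord w c - 2 * w * n := by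
  simp only [dotProduct, spin_mul_ringCoupling_mulVec_spin, Finset.sum_sub_distrib,
    ← Finset.mul_sum, concord]
  simp [ZMod.card]
  ring

theorem spin_doSwap {c : Config n} {u v : ZMod n} (h : c u ≠ c v) :
    spin (doSwap c u v) = spin c - Pi.single u (2 * spin c u) - Pi.single v (2 * spin c v) := by
  have huv : u ≠ v := fun e => h (congrArg c e)
  funext i
  by_cases hiv : i = v
  · subst hiv
    simp [doSwap, spin, huv.symm]
    cases hu : c u <;> cases hv : c i <;> simp_all [xval]
  · by_cases hiu : i = u
    · subst hiu
      simp [doSwap, spin, huv]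
      cases hu : c i <;> cases hv : c v <;> simp_all [xval]
    · simp [doSwap, spin, hiu, hiv]

theorem concord_lt_concord_doSwap [NeZero n] (hn : 2 * w < n) {c : Config n} {u v : ZMod n}
    (hu : ¬ happy w c u) (hv : ¬ happy w c v) (h : c u ≠ c v) :
    concord w c < concord w (doSwap c u v) := by
  have hquad := dotProduct_mulVec_sub_single_sub_single (ringCoupling_isSymm (w := w)) (spin c)
    u v (2 * spin c u) (2 * spin c v)
  rw [← spin_doSwap h, spin_dotProduct_ringCoupling_mulVec_spin,
    spin_dotProduct_ringCoupling_mulVec_spin, ringCoupling_apply_self (by omega),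
    ringCoupling_apply_self (by omega)] at hquad
  have hopp : spin c u * spin c v = -1 := by
    simp only [spin, xval]
    cases hcu : c u <;> cases hcv : c v <;> simp_all
  have hgain : 2 * (concord w (doSwap c u v) : ℤ) = 2 * concord w c -
      4 * (spin c u * (ringCoupling w n *ᵥ spin c) u + spin c v * (ringCoupling w n *ᵥ spin c) v)
        - 8 * ringCoupling w n u v := by
    linear_combination hquad + 8 * ringCoupling w n u v * hopp
  have := spin_mul_ringCoupling_mulVec_spin_le_of_not_happy hu
  have := spin_mul_ringCoupling_mulVec_spin_le_of_not_happy hv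
  have := ringCoupling_le_one hn u v
  have : (concord w c : ℤ) < concord w (doSwap c u v) := by linarith
  exact_mod_cast this

end Ring

section Dynamics

variable {w n : ℕ}

theorem frozen_iff_forall_swapStep_eq {c : Config n} :
    Frozen w c ↔ ∀ p, swapStep w c p = c := by
  refine ⟨fun h p => if_neg (h p.1 p.2), fun h i j hij => ?_⟩
  have hne : i ≠ j := fun e => hij.2.2 (congrArg c e)
  have hswap := h (i, j)
  rw [swapStep, if_pos hij] at hswap
  exact hij.2.2 (by simpa [doSwap, hne] using (congrFun hswap i).symm)

theorem swapStep_eq_of_fst_eq_snd {c : Config n} {p : ZMod n × ZMod n} (hp : p.1 = p.2) :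
    swapStep w c p = c :=
  if_neg fun h => h.2.2 (congrArg c hp)

theorem concord_lt_concord_swapStep [NeZero n] (hn : 2 * w < n) {c : Config n}
    {p : ZMod n × ZMod n} (h : swapStep w c p ≠ c) :
    concord w c < concord w (swapStep w c p) := by
  unfold swapStep at h ⊢
  split_ifs at h ⊢ with hlegal
  · exact concord_lt_concord_doSwap hn hlegal.1 hlegal.2.1 hlegal.2.2
  · exact absurd rfl h

theorem concord_le [NeZero n] (c : Config n) : concord w c ≤ 2 * w * n := by
  have hagree : ∀ i, agreeCount w c i ≤ 2 * w := fun i =>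
    (Finset.sum_le_sum (g := fun _ => 2) fun k _ => by split_ifs <;> simp).trans_eq
      (by simp [mul_comm])
  simpa [concord, ZMod.card, mul_comm] using
    Finset.sum_le_sum (s := Finset.univ) fun i _ => hagree i

theorem traj_eq_foldl (c₀ : Config n) (pr : ℕ → ZMod n × ZMod n) (T : ℕ) :
    traj w c₀ pr T = (List.ofFn fun t : Fin T => pr t).foldl (swapStep w) c₀ := by
  induction T with
  | zero => rfl
  | succ T ih =>
    rw [traj, ih, List.ofFn_succ_last, List.foldl_concat]
    rfl

end Dynamics

section Probability

variable {w n : ℕ}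

theorem distinctPairs_nonempty [NeZero n] (hn : 2 ≤ n) : (distinctPairs n).Nonempty := by
  have : Fact (1 < n) := ⟨hn⟩
  exact ⟨(0, 1), by simp [distinctPairs]⟩

theorem pairMeasure_swapStep_eq_le [NeZero n] {c : Config n} {p : ZMod n × ZMod n}
    (hp : swapStep w c p ≠ c) :
    pairMeasure n {q | swapStep w c q = c} ≤ 1 - ((distinctPairs n).card : ℝ≥0∞)⁻¹ :=
  uniformOn_le_one_sub_inv_card
    (by simpa [distinctPairs] using fun h => hp (swapStep_eq_of_fst_eq_snd h)) hp

theorem measure_not_frozen_le [NeZero n] (hn : 2 * w < n) (hn₂ : 2 ≤ n) (T : ℕ) :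
    ((configMeasure n).prod (Measure.pi fun _ : Fin T => pairMeasure n))
        {a | ¬ Frozen w ((List.ofFn a.2).foldl (swapStep w) a.1)} ≤
      ((1 + (1 - ((distinctPairs n).card : ℝ≥0∞)⁻¹)) / 2) ^ T * 2 ^ (2 * w * n) := by
  have : IsProbabilityMeasure (pairMeasure n) :=
    isProbabilityMeasure_uniformOn (distinctPairs_nonempty hn₂)
  have : IsProbabilityMeasure (configMeasure n) :=
    isProbabilityMeasure_uniformOn Finset.univ_nonempty
  have hslice : ∀ c₀ : Config n, Measure.pi (fun _ : Fin T => pairMeasure n)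
      {g | ¬ Frozen w ((List.ofFn g).foldl (swapStep w) c₀)} ≤
        ((1 + (1 - ((distinctPairs n).card : ℝ≥0∞)⁻¹)) / 2) ^ T * 2 ^ (2 * w * n) := by
    intro c₀
    simp only [frozen_iff_forall_swapStep_eq, not_forall]
    refine (measure_pi_foldl_not_absorbed_le (μ := pairMeasure n) (step := swapStep w)
      (φ := fun c => 2 * w * n - concord w c) (fun c p hp => ?_)
      (fun c ⟨p, hp⟩ => pairMeasure_swapStep_eq_le hp) T c₀).trans ?_
    · have := concord_lt_concord_swapStep hn hp
      have := concord_le (w := w) (swapStep w c p)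
      omega
    · gcongr
      · exact one_le_two
      · omega
  rw [Measure.prod_apply MeasurableSet.of_discrete]
  calc _ ≤ ∫⁻ _ : Config n, ((1 + (1 - ((distinctPairs n).card : ℝ≥0∞)⁻¹)) / 2) ^ T *
          2 ^ (2 * w * n) ∂configMeasure n := lintegral_mono fun c₀ => hslice c₀
    _ = _ := by simp

theorem measure_preimage_eq_of_isSchellingProcess [NeZero n] (hn₂ : 2 ≤ n) {Ω : Type*}
    [MeasurableSpace Ω] {μ : Measure Ω} {init : Ω → Config n}
    {prop : ℕ → Ω → ZMod n × ZMod n} (hproc : IsSchellingProcess n μ init prop) (T : ℕ)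
    (B : Set (Config n × (Fin T → ZMod n × ZMod n))) :
    μ ((fun ω => (init ω, fun t : Fin T => prop t ω)) ⁻¹' B) =
      ((configMeasure n).prod (Measure.pi fun _ : Fin T => pairMeasure n)) B := by
  have : IsProbabilityMeasure (pairMeasure n) :=
    isProbabilityMeasure_uniformOn (distinctPairs_nonempty hn₂)
  have : IsProbabilityMeasure (configMeasure n) :=
    isProbabilityMeasure_uniformOn Finset.univ_nonempty
  have hmeas : AEMeasurable (fun ω => (init ω, fun t : Fin T => prop t ω)) μ := by
    by_contra h
    have huniv := congrArg (· Set.univ) ((Measure.map_of_not_aemeasurable h).symm.trans (hproc T))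
    simp at huniv
  rw [← Measure.map_apply_of_aemeasurable hmeas MeasurableSet.of_discrete, hproc T]

end Probability

theorem eventually_frozen_general (w : ℕ) (hw : 1 ≤ w) (ε : ℝ≥0∞) :
    ∃ N : ℕ, ∀ n : ℕ, N ≤ n → ∀ (hn : 2 * w < n) [NeZero n],
    ∀ (Ω : Type) (mΩ : MeasurableSpace Ω) (μ : Measure Ω),
      IsProbabilityMeasure μ →
    ∀ (init : Ω → Config n) (prop : ℕ → Ω → ZMod n × ZMod n),
      IsSchellingProcess n μ init prop →
      1 - ε ≤ μ {ω | ∃ T : ℕ, Frozen w (traj w (init ω) (fun t => prop t ω) T)} := by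
  refine ⟨0, fun n _ hn _ Ω _ μ _ init prop hproc => ?_⟩
  have hn₂ : 2 ≤ n := by omega
  set S := {ω | ∃ T : ℕ, Frozen w (traj w (init ω) (fun t => prop t ω) T)}
  set q := (1 + (1 - ((distinctPairs n).card : ℝ≥0∞)⁻¹)) / 2
  have hq : q < 1 := one_add_div_two_lt_one
    (ENNReal.sub_lt_self ENNReal.one_ne_top one_ne_zero (by simp))
  have hdecay : Filter.Tendsto (fun T : ℕ => q ^ T * 2 ^ (2 * w * n)) Filter.atTop (nhds 0) := by
    simpa using ENNReal.Tendsto.mul_const (ENNReal.tendsto_pow_atTop_nhds_zero_of_lt_one hq)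
      (Or.inr (by simp))
  have hnever : μ Sᶜ = 0 := by
    refine le_antisymm (ge_of_tendsto' hdecay fun T => ?_) bot_le
    calc μ Sᶜ ≤ μ ((fun ω => (init ω, fun t : Fin T => prop t ω)) ⁻¹'
          {a | ¬ Frozen w ((List.ofFn a.2).foldl (swapStep w) a.1)}) :=
          measure_mono fun ω hω hfrozen => hω ⟨T, by rw [traj_eq_foldl]; exact hfrozen⟩
      _ ≤ q ^ T * 2 ^ (2 * w * n) := by
          rw [measure_preimage_eq_of_isSchellingProcess hn₂ hproc]
          exact measure_not_frozen_le hn hn₂ T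
  calc 1 - ε ≤ μ Set.univ := tsub_le_self.trans measure_univ.ge
    _ ≤ μ S + μ Sᶜ := measure_univ_le_add_compl S
    _ = μ S := by rw [hnever, add_zero]

/-- For every fixed window size `w`, the probability that the
segregation process on the ring of `n` nodes eventually reaches a frozen configuration
converges to `1` as `n → ∞`. -/
theorem eventually_frozen (w : ℕ) (hw : 1 ≤ w) (ε : ℝ≥0∞) (hε : 0 < ε) :
    ∃ N : ℕ, ∀ n : ℕ, N ≤ n → ∀ (hn : 2 * w < n) [NeZero n],
    ∀ (Ω : Type) (mΩ : MeasurableSpace Ω) (μ : Measure Ω),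
      IsProbabilityMeasure μ →
    ∀ (init : Ω → Config n) (prop : ℕ → Ω → ZMod n × ZMod n),
      IsSchellingProcess n μ init prop →
      1 - ε ≤ μ {ω | ∃ T : ℕ, Frozen w (traj w (init ω) (fun t => prop t ω) T)} :=
  eventually_frozen_general w hw ε

end Schelling
end

section
/- Let a configuration on the ring of n nodes be such that the set of nodes belonging to firewalls and its complement are both nonempty. Then there exists a node a not belonging to any firewall that is adjacent to a node b belonging to a firewall, the labels of a and b are opposite, and a is unhappy. -/
open MeasureTheory ProbabilityTheory
open scoped ENNReal NNReal

namespace Schelling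

/-- On a cycle, if a property holds somewhere and fails somewhere, there is a node
where it fails whose successor satisfies it. -/
lemma boundary_exists {n : ℕ} (P : ZMod n → Prop) :
    ∀ k : ℕ, ∀ j : ZMod n, P j → ¬ P (j - (k : ZMod n)) → ∃ a, ¬ P a ∧ P (a + 1) := by
  intro k
  induction k with
  | zero => intro j hj h; simp at h; exact absurd hj h
  | succ k ih =>
    intro j hj h
    by_cases hk : P (j - (k : ZMod n))
    · refine ⟨j - ((k + 1 : ℕ) : ZMod n), h, ?_⟩
      have : j - ((k + 1 : ℕ) : ZMod n) + 1 = j - (k : ZMod n) := by push_cast; ring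
      rw [this]; exact hk
    · exact ih j hj hk

/-- If both the set of nodes belonging to firewalls and its complement
are nonempty, then there is a node `a` outside every firewall adjacent to a node `b` in
a firewall, with `a` and `b` oppositely labeled and `a` unhappy. -/
theorem unhappy_at_firewall_boundary (w n : ℕ) (hw : 1 ≤ w) (hn : 2 * w < n) [NeZero n]
    (c : Config n)
    (h1 : ∃ i, InFirewall w c i) (h2 : ∃ i, ¬ InFirewall w c i) :
    ∃ a b : ZMod n, ¬ InFirewall w c a ∧ InFirewall w c b ∧
      (b = a + 1 ∨ b = a - 1) ∧ c a ≠ c b ∧ ¬ happy w c a := by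
  obtain ⟨j, hj⟩ := h1
  obtain ⟨i, hi⟩ := h2
  have hij : j - (((j - i).val : ℕ) : ZMod n) = i := by
    rw [ZMod.natCast_val, ZMod.cast_id]; ring
  obtain ⟨a, ha, hb⟩ := boundary_exists (InFirewall w c) (j - i).val j hj
    (by rw [hij]; exact hi)
  obtain ⟨s, len, hlen, hmono, k, hk, hbk⟩ := hb
  -- the boundary node a+1 must be the start of its firewall block
  obtain _ | k' := k
  swap
  · exfalso
    apply ha
    refine ⟨s, len, hlen, hmono, k', by omega, ?_⟩
    have : a + 1 = s + (k' : ZMod n) + 1 := by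
      rw [hbk]; push_cast; ring
    exact add_right_cancel this
  push_cast at hbk
  rw [add_zero] at hbk
  -- hbk : a + 1 = s
  have hcs : c s = c (a + 1) := by rw [hbk]
  -- labels differ across the boundary
  have hne : c a ≠ c (a + 1) := by
    intro heq
    apply ha
    refine ⟨a, len + 1, by omega, ?_, 0, by omega, by simp⟩
    intro m hm
    obtain _ | m' := m
    · simp
    · have h1 : a + ((m' + 1 : ℕ) : ZMod n) = s + (m' : ZMod n) := by
        rw [← hbk]; push_cast; ring
      rw [h1, hmono m' (by omega), hcs, ← heq]
  -- all right neighbours of a (within distance w) lie in the firewall block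
  have hmid : ∀ k ∈ Finset.Icc 1 w, c (a + (k : ZMod n)) ≠ c a := by
    intro k hk0
    rw [Finset.mem_Icc] at hk0
    obtain ⟨k'', rfl⟩ : ∃ k'', k = k'' + 1 := ⟨k - 1, by omega⟩
    have h1 : a + ((k'' + 1 : ℕ) : ZMod n) = s + (k'' : ZMod n) := by
      rw [← hbk]; push_cast; ring
    rw [h1, hmono k'' (by omega), hcs]
    exact fun h => hne h.symm
  -- a is unhappy
  have hunhappy : ¬ happy w c a := by
    intro hh
    unfold happy at hh
    have hterm : ∀ k ∈ Finset.Icc 1 w,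
        ((if c (a + (k : ZMod n)) = c a then 1 else 0) +
         (if c (a - (k : ZMod n)) = c a then 1 else 0) : ℕ)
        = if c (a - (k : ZMod n)) = c a then 1 else 0 := by
      intro k hk0; rw [if_neg (hmid k hk0), zero_add]
    rw [Finset.sum_congr rfl hterm] at hh
    have hall : ∀ k ∈ Finset.Icc 1 w, c (a - (k : ZMod n)) = c a := by
      by_contra hc
      push_neg at hc
      obtain ⟨k₀, hk₀, hne₀⟩ := hc
      have hlt : ∑ k ∈ Finset.Icc 1 w, (if c (a - (k : ZMod n)) = c a then 1 else 0 : ℕ)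
          < ∑ _k ∈ Finset.Icc 1 w, 1 := by
        apply Finset.sum_lt_sum
        · intro i0 _; split <;> omega
        · exact ⟨k₀, hk₀, by rw [if_neg hne₀]; omega⟩
      rw [Finset.sum_const, Nat.card_Icc, smul_eq_mul, mul_one] at hlt
      omega
    apply ha
    have e0 : c (a - (w : ZMod n)) = c a :=
      hall w (by rw [Finset.mem_Icc]; omega)
    refine ⟨a - (w : ZMod n), w + 1, le_refl _, ?_, w, by omega, by rw [sub_add_cancel]⟩
    intro m hm
    have e1 : a - (w : ZMod n) + (m : ZMod n) = a - ((w - m : ℕ) : ZMod n) := by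
      have h2 : (w : ZMod n) = ((w - m : ℕ) : ZMod n) + (m : ZMod n) := by
        rw [← Nat.cast_add]; congr 1; omega
      rw [h2]; ring
    rw [e1, e0]
    rcases Nat.eq_or_lt_of_le (Nat.le_of_lt_succ hm) with heq | hlt
    · rw [heq]; simp
    · exact hall (w - m) (by rw [Finset.mem_Icc]; omega)
  exact ⟨a, a + 1, ha, ⟨s, len, hlen, hmono, 0, by omega, by rw [← hbk]; simp⟩,
    Or.inl rfl, hne, hunhappy⟩

end Schelling
end

section
/- Firewalls are stable under the segregation dynamics: if a configuration on the ring contains a firewall, then every node of the firewall is happy, and after any finite sequence of legal swaps (each swap exchanging the labels of two unhappy, oppositely labeled nodes) the same block of nodes still forms a firewall with the same label. In particular, once a firewall is created during the segregation process, no node in it ever changes label. -/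
open MeasureTheory ProbabilityTheory
open scoped ENNReal NNReal

namespace Schelling

lemma happy_of_block {w n : ℕ} (c : Config n) (s : ZMod n) (len : ℕ)
    (hlen : w + 1 ≤ len) (hmono : MonochromaticBlock c s len) :
    ∀ k < len, happy w c (s + (k : ZMod n)) := by
  intro k hk
  have hci : c (s + (k : ZMod n)) = c s := hmono k hk
  unfold happy
  have key : ∀ j ∈ Finset.Icc 1 w,
      ((if k + j < len then 1 else 0) + (if j ≤ k then 1 else 0) : ℕ) ≤
      (if c (s + (k : ZMod n) + (j : ZMod n)) = c (s + (k : ZMod n)) then 1 else 0) +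
      (if c (s + (k : ZMod n) - (j : ZMod n)) = c (s + (k : ZMod n)) then 1 else 0) := by
    intro j _
    have h1 : ((if k + j < len then 1 else 0) : ℕ) ≤
        if c (s + (k : ZMod n) + (j : ZMod n)) = c (s + (k : ZMod n)) then 1 else 0 := by
      rcases Nat.lt_or_ge (k + j) len with h | h
      · have e : c (s + (k : ZMod n) + (j : ZMod n)) = c (s + (k : ZMod n)) := by
          have e2 : s + (k : ZMod n) + (j : ZMod n) = s + ((k + j : ℕ) : ZMod n) := by
            push_cast; ring
          rw [e2, hmono _ h, hci]
        simp [e, h]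
      · rw [if_neg (Nat.not_lt.2 h)]; exact Nat.zero_le _
    have h2 : ((if j ≤ k then 1 else 0) : ℕ) ≤
        if c (s + (k : ZMod n) - (j : ZMod n)) = c (s + (k : ZMod n)) then 1 else 0 := by
      rcases le_or_gt j k with h | h
      · have e : c (s + (k : ZMod n) - (j : ZMod n)) = c (s + (k : ZMod n)) := by
          have e2 : s + (k : ZMod n) - (j : ZMod n) = s + ((k - j : ℕ) : ZMod n) := by
            rw [Nat.cast_sub h]; ring
          rw [e2, hmono _ (by omega), hci]
        simp [e, h]
      · rw [if_neg (by omega)]; exact Nat.zero_le _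
    exact Nat.add_le_add h1 h2
  refine le_trans ?_ (Finset.sum_le_sum key)
  rw [Finset.sum_add_distrib, Finset.sum_boole, Finset.sum_boole]
  have e1 : (Finset.Icc 1 w).filter (fun j => k + j < len) =
      Finset.Icc 1 (min w (len - 1 - k)) := by
    ext j; simp [Finset.mem_filter, Finset.mem_Icc]; omega
  have e2 : (Finset.Icc 1 w).filter (fun j => j ≤ k) = Finset.Icc 1 (min w k) := by
    ext j; simp [Finset.mem_filter, Finset.mem_Icc]; omega
  rw [e1, e2, Nat.card_Icc, Nat.card_Icc]
  push_cast
  omega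

/-- Firewalls are stable: if `c` contains a firewall (a monochromatic
block of length `len ≥ w + 1`), then every node of the firewall is happy, and after any
finite sequence of legal swaps the same block is still monochromatic with the same
label; in particular no node of the firewall ever changes label. -/
theorem firewall_stable (w n : ℕ) (hw : 1 ≤ w) (hn : 2 * w < n) [NeZero n]
    (c : Config n) (s : ZMod n) (len : ℕ) (hlen : w + 1 ≤ len)
    (hmono : MonochromaticBlock c s len) :
    (∀ k < len, happy w c (s + (k : ZMod n))) ∧
    (∀ d : Config n, Relation.ReflTransGen (LegalSwap w) c d →
      ∀ k < len, d (s + (k : ZMod n)) = c s) := by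
  refine ⟨happy_of_block c s len hlen hmono, ?_⟩
  intro d hcd
  induction hcd with
  | refl => exact fun k hk => hmono k hk
  | tail _ hstep ih =>
    rename_i mid fin hR
    have hbs : mid s = c s := by
      have := ih 0 (by omega)
      simpa using this
    have hmonob : MonochromaticBlock mid s len := by
      intro k hk
      rw [ih k hk, hbs]
    obtain ⟨i, j, hij, hui, huj, hne, hd⟩ := hstep
    have hb := happy_of_block mid s len hlen hmonob
    intro k hk
    have hki : s + (k : ZMod n) ≠ i := fun h => hui (h ▸ hb k hk)
    have hkj : s + (k : ZMod n) ≠ j := fun h => huj (h ▸ hb k hk)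
    rw [hd, doSwap, Function.update_of_ne hkj, Function.update_of_ne hki]
    exact ih k hk

end Schelling
end

section
/- Let B be a uniformly random sequence in {+1, −1}^w and for k > 0 let E^L_k be the event that some prefix sum of B is at most −k. If a < b are two integers such that the events {χ(B) = a} and {χ(B) = b} both have positive probability, then Pr(E^L_k | χ(B) = a) ≥ Pr(E^L_k | χ(B) = b). -/
/-!
Write `t` for the number of `+1` entries of `B`, so that `χ(B) = 2t - w` and the level
`{χ = 2t - w}` has `C(w, t)` elements. If `2t + k ≤ w` every sequence of the level ends at or
below `-k`. Otherwise, reflecting every step after the first visit to `-k` maps the sequences of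
level `t` that reach `-k` bijectively onto those of level `w - k - t`, which all reach `-k`.
Hence `Pr(E^L_k | t) = min 1 (C(w, t + k) / C(w, t))`, and this is antitone in `t` by the
log-concavity of binomial coefficients.
-/

open MeasureTheory ProbabilityTheory
open scoped ENNReal NNReal

namespace Nat

theorem choose_le_choose_of_le_of_le_half {w m j : ℕ} (hmj : m ≤ j) (hj : j ≤ w / 2) :
    w.choose m ≤ w.choose j := by
  induction j, hmj using Nat.le_induction with
  | base => rfl
  | succ j _ ih => exact (ih (by omega)).trans (choose_le_succ_of_lt_half_left (by omega))

theorem choose_le_choose_of_le_of_add_le {w m j : ℕ} (hmj : m ≤ j) (h : m + j ≤ w) :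
    w.choose m ≤ w.choose j := by
  by_cases hj : 2 * j ≤ w
  · exact choose_le_choose_of_le_of_le_half hmj (by omega)
  · rw [← choose_symm (by omega : j ≤ w)]
    exact choose_le_choose_of_le_of_le_half (by omega) (by omega)

theorem choose_add_succ_mul_choose_le (w k q : ℕ) :
    w.choose (q + 1 + k) * w.choose q ≤ w.choose (q + k) * w.choose (q + 1) := by
  refine Nat.le_of_mul_le_mul_right (c := (q + k + 1) * (q + 1)) ?_ (by positivity)
  have hq := choose_succ_right_eq w q
  have hqk := choose_succ_right_eq w (q + k)
  rw [show q + 1 + k = q + k + 1 by ring]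
  calc w.choose (q + k + 1) * w.choose q * ((q + k + 1) * (q + 1))
      = w.choose (q + k + 1) * (q + k + 1) * w.choose q * (q + 1) := by ring
    _ = w.choose (q + k) * w.choose q * ((w - (q + k)) * (q + 1)) := by rw [hqk]; ring
    _ ≤ w.choose (q + k) * w.choose q * ((w - q) * (q + k + 1)) := by gcongr <;> omega
    _ = w.choose (q + k) * (w.choose q * (w - q)) * (q + k + 1) := by ring
    _ = w.choose (q + k) * w.choose (q + 1) * ((q + k + 1) * (q + 1)) := by rw [← hq]; ring

theorem choose_add_mul_choose_le (w k : ℕ) {p q : ℕ} (hpq : p ≤ q) :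
    w.choose (q + k) * w.choose p ≤ w.choose (p + k) * w.choose q := by
  induction q, hpq using Nat.le_induction with
  | base => rw [mul_comm]
  | succ q hpq ih =>
    rcases lt_or_ge w q with hwq | hqw
    · rw [choose_eq_zero_of_lt (by omega : w < q + 1 + k)]
      simp
    refine Nat.le_of_mul_le_mul_right (c := w.choose q) ?_ (choose_pos hqw)
    calc w.choose (q + 1 + k) * w.choose p * w.choose q
        = w.choose (q + 1 + k) * w.choose q * w.choose p := by ring
      _ ≤ w.choose (q + k) * w.choose (q + 1) * w.choose p :=
        Nat.mul_le_mul_right _ (choose_add_succ_mul_choose_le w k q)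
      _ = w.choose (q + k) * w.choose p * w.choose (q + 1) := by ring
      _ ≤ w.choose (p + k) * w.choose q * w.choose (q + 1) := by gcongr
      _ = w.choose (p + k) * w.choose (q + 1) * w.choose q := by ring

end Nat

namespace ENNReal

theorem natCast_div_le_natCast_div {m n m' n' : ℕ} (hn' : n' ≠ 0) (h : m * n' ≤ m' * n) :
    (m : ℝ≥0∞) / n ≤ m' / n' := by
  rcases eq_or_ne n 0 with rfl | hn
  · obtain rfl : m = 0 := by simpa [hn'] using h
    simp
  calc (m : ℝ≥0∞) / n = m * n' / (n' * n) := by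
        rw [mul_comm (n' : ℝ≥0∞),
          ENNReal.mul_div_mul_right _ _ (by simpa) (natCast_ne_top n')]
    _ ≤ m' * n / (n' * n) := by gcongr ?_ / _; exact_mod_cast h
    _ = m' / n' := ENNReal.mul_div_mul_right _ _ (by simpa) (natCast_ne_top n)

end ENNReal

namespace Schelling

open Finset

section UniformOn

variable {α : Type*} [Fintype α] [MeasurableSpace α] [MeasurableSingletonClass α]

theorem uniformOn_univ_apply (s : Set α) [DecidablePred (· ∈ s)] :
    uniformOn (univ : Finset α) s = #{x | x ∈ s} / Fintype.card α := by
  simp only [uniformOn, Measure.smul_apply, Measure.coe_finsetSum, Finset.sum_apply,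
    Measure.dirac_apply, Set.indicator_apply, Pi.one_apply, sum_boole, card_univ, smul_eq_mul]
  rw [ENNReal.div_eq_inv_mul]

theorem cond_uniformOn_univ (s t : Set α) [DecidablePred (· ∈ s)]
    [DecidablePred (· ∈ s ∩ t)] :
    cond (uniformOn (univ : Finset α)) s t = #{x | x ∈ s ∩ t} / #{x | x ∈ s} := by
  rw [cond_apply s.toFinite.measurableSet, uniformOn_univ_apply, uniformOn_univ_apply]
  rcases isEmpty_or_nonempty α with _ | _
  · simp
  have hc : (Fintype.card α : ℝ≥0∞) ≠ ⊤ := ENNReal.natCast_ne_top _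
  rw [ENNReal.inv_div (Or.inl hc) (Or.inl (by simp)), mul_comm, ← mul_div_assoc,
    ENNReal.div_mul_cancel (by simp) hc]

end UniformOn

section SignSequences

variable {w k : ℕ}

def trueCount (B : Fin w → Bool) : ℕ := #{i | B i = true}

theorem chi_eq_two_mul_trueCount_sub (B : Fin w → Bool) : chi B = 2 * trueCount B - w := by
  have hx : ∀ b : Bool, xval b = 2 * (if b = true then 1 else 0) - 1 := by decide
  simp only [chi, trueCount, hx, sum_sub_distrib, ← mul_sum, sum_boole]
  simp

theorem card_trueCount_eq (w t : ℕ) : #{B : Fin w → Bool | trueCount B = t} = w.choose t := by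
  calc #{B : Fin w → Bool | trueCount B = t}
      = #(powersetCard t (univ : Finset (Fin w))) := by
        refine card_nbij' (fun B => ({i | B i = true} : Finset (Fin w)))
          (fun s i => decide (i ∈ s)) ?_ ?_ ?_ ?_
        · intro B hB
          simpa [trueCount] using (mem_filter.mp hB).2
        · intro s hs
          refine mem_filter.mpr ⟨mem_univ _, ?_⟩
          simpa [trueCount] using (mem_powersetCard.mp hs).2
        · intro B _
          funext i
          simp
        · intro s _
          ext i
          simp
    _ = w.choose t := by simp

theorem chiPrefix_zero (B : Fin w → Bool) : chiPrefix B 0 = 0 := by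
  simp [chiPrefix]

theorem chiPrefix_of_le {j : ℕ} (B : Fin w → Bool) (h : w ≤ j) : chiPrefix B j = chi B :=
  sum_congr rfl fun i _ => if_pos (i.isLt.trans_le h)

theorem chiPrefix_succ (B : Fin w → Bool) (j : ℕ) :
    chiPrefix B (j + 1) = chiPrefix B j + if h : j < w then xval (B ⟨j, h⟩) else 0 := by
  unfold chiPrefix
  split_ifs with h
  · rw [← Fintype.sum_ite_eq' (⟨j, h⟩ : Fin w) fun i => xval (B i), ← sum_add_distrib]
    refine sum_congr rfl fun i _ => ?_
    simp only [Fin.ext_iff]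
    split_ifs <;> omega
  · rw [add_zero]
    refine sum_congr rfl fun i _ => ?_
    have := i.isLt
    split_ifs <;> omega

theorem chiPrefix_le_succ_add_one (B : Fin w → Bool) (j : ℕ) :
    chiPrefix B j ≤ chiPrefix B (j + 1) + 1 := by
  rw [chiPrefix_succ]
  split_ifs with h
  · unfold xval
    split <;> omega
  · omega

def HitsBelow (k : ℕ) (B : Fin w → Bool) : Prop := ∃ j, chiPrefix B j ≤ -(k : ℤ)

noncomputable def hitTime (k : ℕ) (B : Fin w → Bool) : ℕ :=
  sInf {j | chiPrefix B j ≤ -(k : ℤ)}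

theorem chiPrefix_hitTime_le {B : Fin w → Bool} (hB : HitsBelow k B) :
    chiPrefix B (hitTime k B) ≤ -(k : ℤ) :=
  Nat.sInf_mem hB

/-- The walk moves by `±1` from `0`, so it first crosses `-k` exactly at `-k`. -/
theorem chiPrefix_hitTime (hk : 0 < k) {B : Fin w → Bool} (hB : HitsBelow k B) :
    chiPrefix B (hitTime k B) = -(k : ℤ) := by
  have hle := chiPrefix_hitTime_le hB
  obtain ⟨j, hj⟩ : ∃ j, hitTime k B = j + 1 :=
    Nat.exists_eq_add_one_of_ne_zero fun h0 => by rw [h0, chiPrefix_zero] at hle; omega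
  have hbefore : ¬ chiPrefix B j ≤ -(k : ℤ) :=
    Nat.notMem_of_lt_sInf (show j < hitTime k B by omega)
  have hstep := chiPrefix_le_succ_add_one B j
  rw [hj] at hle ⊢
  omega

def reflectAfter (j : ℕ) (B : Fin w → Bool) : Fin w → Bool :=
  fun i => if (i : ℕ) < j then B i else !B i

theorem reflectAfter_reflectAfter (j : ℕ) (B : Fin w → Bool) :
    reflectAfter j (reflectAfter j B) = B := by
  funext i
  by_cases h : (i : ℕ) < j <;> simp [reflectAfter, h]

theorem chiPrefix_reflectAfter_of_le {j m : ℕ} (B : Fin w → Bool) (h : m ≤ j) :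
    chiPrefix (reflectAfter j B) m = chiPrefix B m :=
  sum_congr rfl fun i _ => by
    split_ifs with hi
    · simp [reflectAfter, hi.trans_le h]
    · rfl

theorem chi_reflectAfter_add (j : ℕ) (B : Fin w → Bool) :
    chi (reflectAfter j B) + chi B = 2 * chiPrefix B j := by
  simp only [chi, chiPrefix, ← sum_add_distrib, mul_sum]
  refine sum_congr rfl fun i _ => ?_
  by_cases h : (i : ℕ) < j <;> cases hb : B i <;> simp [reflectAfter, h, hb, xval]

theorem hitTime_reflectAfter_hitTime {B : Fin w → Bool} (hB : HitsBelow k B) :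
    hitTime k (reflectAfter (hitTime k B) B) = hitTime k B := by
  have hagree {m : ℕ} (hm : m ≤ hitTime k B) :
      chiPrefix (reflectAfter (hitTime k B) B) m = chiPrefix B m :=
    chiPrefix_reflectAfter_of_le B hm
  refine le_antisymm (Nat.sInf_le ?_) (le_csInf ⟨_, Nat.sInf_mem ?_⟩ fun m hm => ?_)
  · rw [Set.mem_ofPred_eq, hagree le_rfl]
    exact chiPrefix_hitTime_le hB
  · exact ⟨_, (hagree le_rfl).trans_le (chiPrefix_hitTime_le hB)⟩
  · by_contra! hlt
    exact Nat.notMem_of_lt_sInf hlt (by rwa [Set.mem_ofPred_eq, ← hagree hlt.le])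

noncomputable def reflectAtHit (k : ℕ) (B : Fin w → Bool) : Fin w → Bool :=
  reflectAfter (hitTime k B) B

theorem hitsBelow_reflectAtHit {B : Fin w → Bool} (hB : HitsBelow k B) :
    HitsBelow k (reflectAtHit k B) :=
  ⟨hitTime k B, (chiPrefix_reflectAfter_of_le B le_rfl).trans_le (chiPrefix_hitTime_le hB)⟩

theorem reflectAtHit_reflectAtHit {B : Fin w → Bool} (hB : HitsBelow k B) :
    reflectAtHit k (reflectAtHit k B) = B := by
  rw [reflectAtHit, reflectAtHit, hitTime_reflectAfter_hitTime hB, reflectAfter_reflectAfter]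

theorem chi_reflectAtHit_add (hk : 0 < k) {B : Fin w → Bool} (hB : HitsBelow k B) :
    chi (reflectAtHit k B) + chi B = -2 * k := by
  rw [reflectAtHit, chi_reflectAfter_add, chiPrefix_hitTime hk hB]
  ring

theorem trueCount_reflectAtHit_add (hk : 0 < k) {B : Fin w → Bool} (hB : HitsBelow k B) :
    trueCount (reflectAtHit k B) + trueCount B + k = w := by
  have h := chi_reflectAtHit_add hk hB
  rw [chi_eq_two_mul_trueCount_sub, chi_eq_two_mul_trueCount_sub] at h
  omega

open Classical in
noncomputable def hitSet (w k t : ℕ) : Finset (Fin w → Bool) :=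
  {B | trueCount B = t ∧ HitsBelow k B}

theorem mem_hitSet {t : ℕ} {B : Fin w → Bool} :
    B ∈ hitSet w k t ↔ trueCount B = t ∧ HitsBelow k B := by
  simp [hitSet]

theorem hitSet_eq_of_two_mul_add_le {t : ℕ} (h : 2 * t + k ≤ w) :
    hitSet w k t = ({B | trueCount B = t} : Finset (Fin w → Bool)) := by
  ext B
  simp only [mem_hitSet, mem_filter, mem_univ, true_and, and_iff_left_iff_imp]
  intro hB
  refine ⟨w, ?_⟩
  rw [chiPrefix_of_le B le_rfl, chi_eq_two_mul_trueCount_sub, hB]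
  omega

theorem hitSet_eq_empty (hk : 0 < k) {t : ℕ} (h : w < t + k) : hitSet w k t = ∅ := by
  refine eq_empty_of_forall_notMem fun B hB => ?_
  obtain ⟨rfl, hhit⟩ := mem_hitSet.mp hB
  have := trueCount_reflectAtHit_add hk hhit
  omega

theorem card_hitSet_eq_of_add_eq (hk : 0 < k) {t t' : ℕ} (h : t + t' + k = w) :
    #(hitSet w k t) = #(hitSet w k t') := by
  have hmaps {u u' : ℕ} (h : u + u' + k = w) :
      Set.MapsTo (reflectAtHit k) (hitSet w k u : Set (Fin w → Bool)) (hitSet w k u') := by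
    intro B hB
    obtain ⟨rfl, hhit⟩ := mem_hitSet.mp hB
    have := trueCount_reflectAtHit_add hk hhit
    exact mem_hitSet.mpr ⟨by omega, hitsBelow_reflectAtHit hhit⟩
  exact card_nbij' _ _ (hmaps h) (hmaps (by omega))
    (fun B hB => reflectAtHit_reflectAtHit (mem_hitSet.mp hB).2)
    (fun B hB => reflectAtHit_reflectAtHit (mem_hitSet.mp hB).2)

theorem card_hitSet (hk : 0 < k) (t : ℕ) :
    #(hitSet w k t) = min (w.choose t) (w.choose (t + k)) := by
  rcases le_or_gt (2 * t + k) w with h | h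
  · rw [hitSet_eq_of_two_mul_add_le h, card_trueCount_eq,
      min_eq_left (Nat.choose_le_choose_of_le_of_add_le (by omega) (by omega))]
  rcases lt_or_ge w (t + k) with h' | h'
  · rw [hitSet_eq_empty hk h', Nat.choose_eq_zero_of_lt h', card_empty, _root_.min_zero]
  have hle : w.choose (t + k) ≤ w.choose t := by
    rw [← Nat.choose_symm h']
    exact Nat.choose_le_choose_of_le_of_add_le (by omega) (by omega)
  rw [card_hitSet_eq_of_add_eq hk (t' := w - (t + k)) (by omega),
    hitSet_eq_of_two_mul_add_le (by omega), card_trueCount_eq, Nat.choose_symm h',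
    min_eq_right hle]

theorem card_hitSet_mul_choose_le (hk : 0 < k) {p q : ℕ} (hpq : p ≤ q) :
    #(hitSet w k q) * w.choose p ≤ #(hitSet w k p) * w.choose q := by
  rw [card_hitSet hk, card_hitSet hk, ← min_mul_mul_right, ← min_mul_mul_right]
  exact min_le_min (mul_comm _ _).le (Nat.choose_add_mul_choose_le w k hpq)

open Classical in
theorem card_chi_hitsBelow_mul_le (hk : 0 < k) {a b : ℤ} (hab : a ≤ b) :
    #{B : Fin w → Bool | chi B = b ∧ HitsBelow k B} * #{B : Fin w → Bool | chi B = a}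
      ≤ #{B : Fin w → Bool | chi B = a ∧ HitsBelow k B} *
          #{B : Fin w → Bool | chi B = b} := by
  by_cases hA : ∃ A : Fin w → Bool, chi A = a
  swap
  · simp [not_exists.mp hA]
  by_cases hB : ∃ B : Fin w → Bool, chi B = b
  swap
  · simp [not_exists.mp hB]
  obtain ⟨A, rfl⟩ := hA
  obtain ⟨B, rfl⟩ := hB
  have hlevel (C D : Fin w → Bool) : chi D = chi C ↔ trueCount D = trueCount C := by
    rw [chi_eq_two_mul_trueCount_sub, chi_eq_two_mul_trueCount_sub]
    omega
  have hle : trueCount A ≤ trueCount B := by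
    rw [chi_eq_two_mul_trueCount_sub, chi_eq_two_mul_trueCount_sub] at hab
    omega
  simp only [hlevel, card_trueCount_eq]
  exact card_hitSet_mul_choose_le hk hle

end SignSequences

theorem prefix_event_antitone_general (w k : ℕ) (hk : 0 < k) (a b : ℤ) (hab : a < b)
    (ha : 0 < uniformOn (Finset.univ : Finset (Fin w → Bool)) {B | chi B = a}) :
    ProbabilityTheory.cond (uniformOn (Finset.univ : Finset (Fin w → Bool)))
        {B | chi B = b} {B | ∃ j : ℕ, chiPrefix B j ≤ -(k : ℤ)}
      ≤ ProbabilityTheory.cond (uniformOn (Finset.univ : Finset (Fin w → Bool)))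
        {B | chi B = a} {B | ∃ j : ℕ, chiPrefix B j ≤ -(k : ℤ)} := by
  classical
  rw [uniformOn_univ_apply, ENNReal.div_pos_iff] at ha
  rw [cond_uniformOn_univ, cond_uniformOn_univ]
  refine ENNReal.natCast_div_le_natCast_div (by exact_mod_cast ha.1) ?_
  convert card_chi_hitsBelow_mul_le hk hab.le using 4 <;> exact Iff.rfl

/-- For a uniformly random `B ∈ {±1}^w` and `k > 0`, conditioning on a
smaller total sum makes the event `E^L_k = {∃ j, χ_j(B) ≤ -k}` more likely: if `a < b`
and both `{χ(B) = a}` and `{χ(B) = b}` have positive probability, then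
`Pr(E^L_k | χ(B) = a) ≥ Pr(E^L_k | χ(B) = b)`. -/
theorem prefix_event_antitone (w k : ℕ) (hk : 0 < k) (a b : ℤ) (hab : a < b)
    (ha : 0 < uniformOn (Finset.univ : Finset (Fin w → Bool)) {B | chi B = a})
    (hb : 0 < uniformOn (Finset.univ : Finset (Fin w → Bool)) {B | chi B = b}) :
    ProbabilityTheory.cond (uniformOn (Finset.univ : Finset (Fin w → Bool)))
        {B | chi B = b} {B | ∃ j : ℕ, chiPrefix B j ≤ -(k : ℤ)}
      ≤ ProbabilityTheory.cond (uniformOn (Finset.univ : Finset (Fin w → Bool)))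
        {B | chi B = a} {B | ∃ j : ℕ, chiPrefix B j ≤ -(k : ℤ)} :=
  prefix_event_antitone_general w k hk a b hab ha

end Schelling
end

section
/- Let B, B', B'' ∈ {+1, −1}^w each be x-promoting, and consider the concatenated sequence of length 3w formed by B followed by B' followed by B''. Then for every position in the middle block B', the sum of the 2w+1 consecutive entries of the concatenation centered at that position is strictly greater than √w. -/
open MeasureTheory ProbabilityTheory
open scoped ENNReal NNReal

namespace Schelling

lemma concat3_left (w : ℕ) (B B' B'' : Fin w → Bool) (i : Fin w) :
    concat3 w B B' B'' i = B i := by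
  simp [concat3, i.isLt]

lemma concat3_mid (w : ℕ) (B B' B'' : Fin w → Bool) (i : Fin w) :
    concat3 w B B' B'' (w + i) = B' i := by
  have hi := i.isLt
  simp only [concat3, dif_neg (by omega : ¬ w + (i : ℕ) < w),
    dif_pos (by omega : w + (i : ℕ) < 2 * w)]
  exact congrArg B' (Fin.ext (by simp))

lemma concat3_right (w : ℕ) (B B' B'' : Fin w → Bool) (i : Fin w) :
    concat3 w B B' B'' (2 * w + i) = B'' i := by
  have hi := i.isLt
  simp only [concat3, dif_neg (by omega : ¬ 2 * w + (i : ℕ) < w),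
    dif_neg (by omega : ¬ 2 * w + (i : ℕ) < 2 * w),
    dif_pos (by omega : 2 * w + (i : ℕ) < 3 * w)]
  exact congrArg B'' (Fin.ext (by simp))

lemma window_sum_eq (w : ℕ) (B B' B'' : Fin w → Bool) (r : ℕ) (hr : r < w) :
    ∑ i ∈ Finset.Icc r (2 * w + r), xval (concat3 w B B' B'' i)
      = chiSuffix B (w - r) + chi B' + chiPrefix B'' (r + 1) := by
  have e1 : chiSuffix B (w - r)
      = ∑ i ∈ Finset.Ico r w, xval (concat3 w B B' B'' i) := by
    calc chiSuffix B (w - r)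
        = ∑ i : Fin w, (if r ≤ (i : ℕ) then xval (concat3 w B B' B'' i) else 0) := by
          unfold chiSuffix
          refine Finset.sum_congr rfl fun i _ => ?_
          simp only [concat3_left]
          have hwr : w - (w - r) = r := by omega
          rw [hwr]
      _ = ∑ i ∈ Finset.range w, (if r ≤ i then xval (concat3 w B B' B'' i) else 0) :=
          Fin.sum_univ_eq_sum_range
            (fun j => if r ≤ j then xval (concat3 w B B' B'' j) else 0) w
      _ = ∑ i ∈ Finset.Ico r w, xval (concat3 w B B' B'' i) := by
          rw [← Finset.sum_filter]
          congr 1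
          ext j
          simp only [Finset.mem_filter, Finset.mem_range, Finset.mem_Ico]
          omega
  have e2 : chi B' = ∑ i ∈ Finset.Ico w (2 * w), xval (concat3 w B B' B'' i) := by
    calc chi B'
        = ∑ i : Fin w, xval (concat3 w B B' B'' (w + (i : ℕ))) := by
          unfold chi
          exact Finset.sum_congr rfl fun i _ => by rw [concat3_mid]
      _ = ∑ i ∈ Finset.range w, xval (concat3 w B B' B'' (w + i)) :=
          Fin.sum_univ_eq_sum_range (fun j => xval (concat3 w B B' B'' (w + j))) w
      _ = ∑ i ∈ Finset.Ico w (2 * w), xval (concat3 w B B' B'' i) := by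
          rw [Finset.sum_Ico_eq_sum_range]
          simp [two_mul]
  have e3 : chiPrefix B'' (r + 1)
      = ∑ i ∈ Finset.Ico (2 * w) (2 * w + r + 1), xval (concat3 w B B' B'' i) := by
    calc chiPrefix B'' (r + 1)
        = ∑ i : Fin w,
            (if (i : ℕ) < r + 1 then xval (concat3 w B B' B'' (2 * w + (i : ℕ))) else 0) := by
          unfold chiPrefix
          refine Finset.sum_congr rfl fun i _ => ?_
          simp only [concat3_right]
      _ = ∑ i ∈ Finset.range w,
            (if i < r + 1 then xval (concat3 w B B' B'' (2 * w + i)) else 0) :=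
          Fin.sum_univ_eq_sum_range
            (fun j => if j < r + 1 then xval (concat3 w B B' B'' (2 * w + j)) else 0) w
      _ = ∑ i ∈ Finset.Ico (2 * w) (2 * w + r + 1), xval (concat3 w B B' B'' i) := by
          rw [← Finset.sum_filter]
          have h2 : (Finset.range w).filter (fun j => j < r + 1) = Finset.range (r + 1) := by
            ext j
            simp only [Finset.mem_filter, Finset.mem_range]
            omega
          rw [h2, Finset.sum_Ico_eq_sum_range]
          have h3 : 2 * w + r + 1 - 2 * w = r + 1 := by omega
          rw [h3]
  have hIcc : Finset.Icc r (2 * w + r) = Finset.Ico r (2 * w + r + 1) := by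
    rw [Finset.Ico_add_one_right_eq_Icc]
  rw [hIcc, e1, e2, e3,
    ← Finset.sum_Ico_consecutive _ (by omega : r ≤ w) (by omega : w ≤ 2 * w + r + 1),
    ← Finset.sum_Ico_consecutive _ (by omega : w ≤ 2 * w) (by omega : 2 * w ≤ 2 * w + r + 1)]
  ring

/-- If `B, B', B'' ∈ {±1}^w` are all x-promoting then, in the
concatenation `B B' B''` of length `3w`, the sum of the `2w + 1` consecutive entries
centered at any position `p` of the middle block (`w ≤ p < 2w`) is greater than `√w`. -/
theorem promoting_window (w : ℕ) (hw : 0 < w) (B B' B'' : Fin w → Bool)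
    (h1 : XPromoting w B) (h2 : XPromoting w B') (h3 : XPromoting w B'') :
    ∀ p : ℕ, w ≤ p → p < 2 * w →
      Real.sqrt w <
        (((∑ i ∈ Finset.Icc (p - w) (p + w), xval (concat3 w B B' B'' i)) : ℤ) : ℝ) := by
  intro p hp hp2
  set r := p - w with hrdef
  have hr : r < w := by omega
  have hpw : p - w = r := rfl
  have hpw2 : p + w = 2 * w + r := by omega
  rw [hpw2, window_sum_eq w B B' B'' r hr]
  have hs : (-2) * Real.sqrt w < ((chiSuffix B (w - r) : ℤ) : ℝ) :=
    (h1.2 (w - r) (by omega) (by omega)).2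
  have hm : 5 * Real.sqrt w ≤ ((chi B' : ℤ) : ℝ) := h2.1
  have hpr : (-2) * Real.sqrt w < ((chiPrefix B'' (r + 1) : ℤ) : ℝ) :=
    (h3.2 (r + 1) (by omega) (by omega)).1
  push_cast
  push_cast at hs hm hpr
  linarith

end Schelling
end

section
/- (Cycle Lemma) Let y_1, …, y_{a+b} be a fixed sequence containing a entries equal to +1 and b entries equal to −1, with a > b. Then the number of cyclic shifts σ ∈ {0, 1, …, a+b−1} such that all partial sums of the shifted sequence (y_{σ+1}, y_{σ+2}, …, y_{σ+a+b}), indices taken modulo a+b, are strictly positive is exactly a − b. Equivalently, applying a uniformly random cyclic permutation to the sequence yields all partial sums strictly positive with probability (a − b)/(a + b). -/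
open MeasureTheory ProbabilityTheory
open scoped ENNReal NNReal

namespace Schelling

private lemma cl_ivt (g : ℕ → ℤ)
    (hstep : ∀ t, g (t + 1) = g t + 1 ∨ g (t + 1) = g t - 1) (v : ℤ) :
    ∀ s t, s ≤ t → g s ≤ v → v ≤ g t → ∃ u, s ≤ u ∧ u ≤ t ∧ g u = v := by
  intro s t
  induction t with
  | zero =>
    intro hst h1 h2
    have hs : s = 0 := Nat.le_zero.mp hst
    subst hs
    exact ⟨0, le_refl _, le_refl _, le_antisymm h1 h2⟩
  | succ t ih =>
    intro hst h1 h2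
    rcases Nat.lt_or_ge s (t + 1) with h | h
    · rcases le_or_gt v (g t) with hv | hv
      · obtain ⟨u, hu1, hu2, hu3⟩ := ih (by omega) h1 hv
        exact ⟨u, hu1, by omega, hu3⟩
      · have hst' := hstep t
        exact ⟨t + 1, by omega, le_refl _, by omega⟩
    · obtain rfl : s = t + 1 := by omega
      exact ⟨t + 1, le_refl _, le_refl _, le_antisymm h1 h2⟩

private lemma cl_count (N : ℕ) (hN : 0 < N) (d : ℤ) (hd : 0 < d) (g : ℕ → ℤ)
    (hstep : ∀ t, g (t + 1) = g t + 1 ∨ g (t + 1) = g t - 1)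
    (hper : ∀ t, g (t + N) = g t + d)
    [DecidablePred fun σ : ℕ => ∀ t, σ < t → g σ < g t] :
    ((Finset.range N).filter fun σ => ∀ t, σ < t → g σ < g t).card = d.toNat := by
  classical
  have hne : ((Finset.range N).image g).Nonempty :=
    ⟨g 0, Finset.mem_image_of_mem _ (Finset.mem_range.2 hN)⟩
  set m := ((Finset.range N).image g).min' hne with hm
  obtain ⟨τ, hτN, hτ⟩ : ∃ τ, τ < N ∧ g τ = m := by
    have h := Finset.min'_mem _ hne
    rw [Finset.mem_image] at h
    obtain ⟨τ, h1, h2⟩ := h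
    exact ⟨τ, Finset.mem_range.mp h1, h2⟩
  have hmle : ∀ t, t < N → m ≤ g t := fun t ht =>
    Finset.min'_le _ _ (Finset.mem_image_of_mem _ (Finset.mem_range.2 ht))
  have hd1 : ∀ t, g t + 1 ≤ g (t + N) := by
    intro t; have := hper t; omega
  have hmall : ∀ t, m ≤ g t := by
    intro t
    induction t using Nat.strong_induction_on with
    | _ t ih =>
      rcases Nat.lt_or_ge t N with h | h
      · exact hmle t h
      · have h1 := hd1 (t - N)
        rw [Nat.sub_add_cancel h] at h1
        have h2 := ih (t - N) (by omega)
        omega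
  have hgrow : ∀ t k, g t + k ≤ g (t + k * N) := by
    intro t k
    induction k with
    | zero => simp
    | succ k ih =>
      have h1 := hd1 (t + k * N)
      have harith : t + k * N + N = t + (k + 1) * N := by ring
      rw [harith] at h1
      push_cast
      push_cast at ih
      omega
  have hlast : ∀ v, m ≤ v → ∃ σ, g σ = v ∧ ∀ t, σ < t → g σ < g t := by
    intro v hv
    set k := (v - m).toNat with hk
    have hkv : (k : ℤ) = v - m := Int.toNat_of_nonneg (by omega)
    have hocc : ∃ u, g u = v := by
      have h1 := hgrow τ k
      obtain ⟨u, _, _, hu⟩ := cl_ivt g hstep v τ (τ + k * N) (by omega) (by omega) (by omega)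
      exact ⟨u, hu⟩
    have hbdd : ∀ t, g t = v → t < (k + 1) * N := by
      intro t hgt
      by_contra hc
      push_neg at hc
      have h1 := hgrow (t % N) (t / N)
      rw [Nat.mod_add_div' t N] at h1
      have h2 := hmle (t % N) (Nat.mod_lt _ hN)
      have h3 : k + 1 ≤ t / N := Nat.le_div_iff_mul_le hN |>.mpr (by omega)
      have h4 : (k : ℤ) + 1 ≤ ((t / N : ℕ) : ℤ) := by exact_mod_cast h3
      omega
    set S := (Finset.range ((k + 1) * N)).filter (fun t => g t = v) with hS
    have hSne : S.Nonempty := by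
      obtain ⟨u, hu⟩ := hocc
      exact ⟨u, Finset.mem_filter.2 ⟨Finset.mem_range.2 (hbdd u hu), hu⟩⟩
    set σ := S.max' hSne with hσ
    have hσv : g σ = v := (Finset.mem_filter.1 (S.max'_mem hSne)).2
    have hσmax : ∀ t, g t = v → t ≤ σ := fun t ht =>
      S.le_max' t (Finset.mem_filter.2 ⟨Finset.mem_range.2 (hbdd t ht), ht⟩)
    refine ⟨σ, hσv, ?_⟩
    intro t hst
    by_contra hc
    push_neg at hc
    have htv : g t < v := by
      rcases eq_or_lt_of_le hc with h | h
      · exact absurd (hσmax t (by rw [h, hσv])) (by omega)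
      · omega
    set k2 := (v - g t).toNat with hk2
    have hk2v : (k2 : ℤ) = v - g t := Int.toNat_of_nonneg (by omega)
    have h1 := hgrow t k2
    obtain ⟨u, hu1, _, hu3⟩ := cl_ivt g hstep v t (t + k2 * N) (by omega) (by omega) (by omega)
    have := hσmax u hu3
    omega
  have hval : ∀ σ, σ < N → (∀ t, σ < t → g σ < g t) → m ≤ g σ ∧ g σ < m + d := by
    intro σ hσN hgood
    refine ⟨hmall σ, ?_⟩
    have h2 := hgood (τ + N) (by omega)
    have h3 := hper τ
    omega
  have hlow : ∀ σ v, g σ = v → v < m + d → σ < N := by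
    intro σ v hσv hvd
    by_contra hc
    push_neg at hc
    have h1 := hper (σ - N)
    rw [Nat.sub_add_cancel hc] at h1
    have := hmall (σ - N)
    omega
  rw [show d.toNat = (Finset.Icc m (m + d - 1)).card by rw [Int.card_Icc]; omega]
  apply Finset.card_bij (fun σ _ => g σ)
  · intro σ hσ
    rw [Finset.mem_filter, Finset.mem_range] at hσ
    have := hval σ hσ.1 hσ.2
    rw [Finset.mem_Icc]; omega
  · intro σ1 h1 σ2 h2 heq
    rw [Finset.mem_filter, Finset.mem_range] at h1 h2
    by_contra hne
    rcases Nat.lt_or_ge σ1 σ2 with h | h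
    · have := h1.2 σ2 h; omega
    · have := h2.2 σ1 (by omega); omega
  · intro v hv
    rw [Finset.mem_Icc] at hv
    obtain ⟨σ, hσv, hσg⟩ := hlast v hv.1
    exact ⟨σ, Finset.mem_filter.2 ⟨Finset.mem_range.2 (hlow σ v hσv (by omega)), hσg⟩, hσv⟩

open Classical in
/-- **Cycle lemma.** For a fixed sequence `y` of `a` entries `+1` and `b`
entries `-1` with `a > b`, exactly `a - b` of the `a + b` cyclic shifts of `y` have all
partial sums strictly positive. -/
theorem cycle_lemma (a b : ℕ) (hab : b < a) (y : Fin (a + b) → Bool)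
    (hy : (Finset.univ.filter fun i => y i = true).card = a) :
    (Finset.univ.filter fun σ : Fin (a + b) =>
        ∀ j ∈ Finset.Icc 1 (a + b),
          0 < ∑ i : Fin (a + b),
            if (i : ℕ) < j then
              xval (y ⟨((σ : ℕ) + (i : ℕ)) % (a + b), Nat.mod_lt _ (by omega)⟩)
            else 0).card = a - b := by
  classical
  have hN : 0 < a + b := by omega
  set f : ℕ → ℤ := fun t => xval (y ⟨t % (a + b), Nat.mod_lt _ hN⟩) with hf
  set g : ℕ → ℤ := fun t => ∑ i ∈ Finset.range t, f i with hg
  have hfs : ∀ t, f t = 1 ∨ f t = -1 := by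
    intro t
    simp only [hf, xval]
    rcases y ⟨t % (a + b), Nat.mod_lt _ hN⟩ with _ | _ <;> simp
  have hgstep : ∀ t, g (t + 1) = g t + f t := by
    intro t; simp [hg, Finset.sum_range_succ]
  have hstep : ∀ t, g (t + 1) = g t + 1 ∨ g (t + 1) = g t - 1 := by
    intro t; have := hgstep t; rcases hfs t with h | h <;> omega
  have hfalse : (Finset.univ.filter fun i : Fin (a + b) => ¬ y i = true).card = b := by
    have h := Finset.card_filter_add_card_filter_not
      (s := (Finset.univ : Finset (Fin (a + b)))) (p := fun i => y i = true)
    rw [hy, Finset.card_univ, Fintype.card_fin] at h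
    omega
  have hchi : ∑ i ∈ Finset.range (a + b), f i = (a : ℤ) - b := by
    have h1 : ∑ i ∈ Finset.range (a + b), f i = ∑ i : Fin (a + b), xval (y i) := by
      rw [← Fin.sum_univ_eq_sum_range]
      apply Finset.sum_congr rfl
      intro i _
      simp only [hf]
      congr 1
      congr 1
      ext
      simp [Nat.mod_eq_of_lt i.isLt]
    rw [h1]
    have h2 : ∀ i : Fin (a + b), xval (y i) = if y i = true then (1 : ℤ) else -1 := by
      intro i; rcases y i with _ | _ <;> simp [xval]
    rw [Finset.sum_congr rfl (fun i _ => h2 i), Finset.sum_ite, Finset.sum_const,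
      Finset.sum_const, hy, hfalse]
    ring
  have hper : ∀ t, g (t + (a + b)) = g t + ((a : ℤ) - b) := by
    intro t
    induction t with
    | zero => simpa [hg] using hchi
    | succ t ih =>
      have h1 : t + 1 + (a + b) = (t + (a + b)) + 1 := by ring
      have h2 : (⟨(t + (a + b)) % (a + b), Nat.mod_lt _ hN⟩ : Fin (a + b))
          = ⟨t % (a + b), Nat.mod_lt _ hN⟩ := by
        ext
        exact Nat.add_mod_right t (a + b)
      have h3 : f (t + (a + b)) = f t := by
        simp only [hf]
        exact congrArg (fun z => xval (y z)) h2
      rw [h1, hgstep (t + (a + b)), hgstep t] at *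
      omega
  have hsumrange : ∀ s j : ℕ, ∑ i ∈ Finset.range j, f (s + i) = g (s + j) - g s := by
    intro s j
    induction j with
    | zero => simp
    | succ j ih =>
      rw [Finset.sum_range_succ, ih, show s + (j + 1) = (s + j) + 1 from rfl, hgstep]
      ring
  have hsum : ∀ (σ : Fin (a + b)) (j : ℕ), j ≤ a + b →
      (∑ i : Fin (a + b),
          if (i : ℕ) < j then
            xval (y ⟨((σ : ℕ) + (i : ℕ)) % (a + b), Nat.mod_lt _ (by omega)⟩)
          else 0) = g ((σ : ℕ) + j) - g (σ : ℕ) := by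
    intro σ j hj
    have h1 : (∑ i : Fin (a + b),
          if (i : ℕ) < j then
            xval (y ⟨((σ : ℕ) + (i : ℕ)) % (a + b), Nat.mod_lt _ (by omega)⟩)
          else 0)
        = ∑ i ∈ Finset.range (a + b), if i < j then f ((σ : ℕ) + i) else 0 :=
      Fin.sum_univ_eq_sum_range (fun i => if i < j then f ((σ : ℕ) + i) else 0) (a + b)
    rw [h1, ← Finset.sum_subset (Finset.range_subset_range.2 hj)
        (fun x _ hx => if_neg (fun h => hx (Finset.mem_range.2 h))),
      Finset.sum_congr rfl (fun i hi => if_pos (Finset.mem_range.1 hi)), hsumrange]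
  have hPgood : ∀ σ : Fin (a + b),
      (∀ j ∈ Finset.Icc 1 (a + b),
        0 < ∑ i : Fin (a + b),
            if (i : ℕ) < j then
              xval (y ⟨((σ : ℕ) + (i : ℕ)) % (a + b), Nat.mod_lt _ (by omega)⟩)
            else 0)
      ↔ (∀ t, (σ : ℕ) < t → g (σ : ℕ) < g t) := by
    intro σ
    constructor
    · intro hP t
      induction t using Nat.strong_induction_on with
      | _ t ih =>
        intro hst
        rcases le_or_gt t ((σ : ℕ) + (a + b)) with h | h
        · have hj := hP (t - (σ : ℕ)) (Finset.mem_Icc.2 ⟨by omega, by omega⟩)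
          rw [hsum σ (t - (σ : ℕ)) (by omega),
            show (σ : ℕ) + (t - (σ : ℕ)) = t from by omega] at hj
          omega
        · have h1 := hper (t - (a + b))
          rw [Nat.sub_add_cancel (by omega)] at h1
          have h2 := ih (t - (a + b)) (by omega) (by omega)
          omega
    · intro hG j hj
      rw [Finset.mem_Icc] at hj
      rw [hsum σ j hj.2]
      have := hG ((σ : ℕ) + j) (by omega)
      omega
  rw [show a - b = ((a : ℤ) - b).toNat from by omega,
    ← cl_count (a + b) hN ((a : ℤ) - b) (by omega) g hstep hper]
  apply Finset.card_bij (fun (σ : Fin (a + b)) _ => (σ : ℕ))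
  · intro σ hσ
    simp only [Finset.mem_filter] at hσ
    exact Finset.mem_filter.2 ⟨Finset.mem_range.2 σ.isLt, (hPgood σ).mp hσ.2⟩
  · intro σ1 _ σ2 _ heq
    exact Fin.val_injective heq
  · intro t ht
    rw [Finset.mem_filter, Finset.mem_range] at ht
    refine ⟨⟨t, ht.1⟩, ?_, rfl⟩
    simp only [Finset.mem_filter]
    exact ⟨Finset.mem_univ _, (hPgood ⟨t, ht.1⟩).mpr ht.2⟩


end Schelling
end
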